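/- arXiv:1807.02779 — 2 statements merged into one kernel-verified Lean document; each statement's English description precedes it below -/
import Mathlib

section
/- For any vector x ∈ ℝ^n, the cyclic sign variation count s_c^+(x) equals s^+(x) if s^+(x) is even, and equals s^+(x) + 1 if s^+(x) is odd. -/
/-- Number of sign changes in a list of reals: the number of adjacent pairs
with strictly negative product. -/
noncomputable def signChanges : List ℝ → ℕ
  | a :: b :: l => (if a * b < 0 then 1 else 0) + signChanges (b :: l)
  | _ => 0

/-- `s⁻` of a list: sign changes after deleting all zero entries. -/
noncomputable def sMinusList (l : List ℝ) : ℕ :=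
  signChanges (l.filter (fun a => decide (a ≠ 0)))

/-- `s⁻(x)`: the number of sign changes in `x` after deleting all zero entries. -/
noncomputable def sMinus {n : ℕ} (x : Fin n → ℝ) : ℕ :=
  sMinusList (List.ofFn x)

/-- Replace each zero entry of `x` by `1` or `-1` according to `ε`. -/
noncomputable def replZeros {n : ℕ} (x : Fin n → ℝ) (ε : Fin n → Bool) : Fin n → ℝ :=
  fun i => if x i = 0 then (if ε i then 1 else -1) else x i

/-- `s⁺(x)`: the maximal number of sign changes over all replacements of the
zero entries of `x` by `±1`. -/
noncomputable def sPlus {n : ℕ} (x : Fin n → ℝ) : ℕ :=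
  Finset.univ.sup fun ε : Fin n → Bool => signChanges (List.ofFn (replZeros x ε))

/-- The cyclically rotated vector `[x i, …, x (n-1), x 0, …, x i]` (of length `n+1`),
as a list. -/
noncomputable def rotList {n : ℕ} (x : Fin n → ℝ) (i : Fin n) : List ℝ :=
  (List.ofFn x).rotate i.val ++ [x i]

/-- The cyclic sign variation count `s_c⁻(x)`: the maximum of `s⁻` over all
cyclic rotations `[x i, …, x (n-1), x 0, …, x i]`. -/
noncomputable def sMinusC {n : ℕ} (x : Fin n → ℝ) : ℕ :=
  Finset.univ.sup fun i : Fin n => sMinusList (rotList x i)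

/-- The cyclic sign variation count `s_c⁺(x)`: the maximum of `s⁺` over all
cyclic rotations, where the two copies of the entry `x i` at the two ends of a
rotation are replaced by the same sign. -/
noncomputable def sPlusC {n : ℕ} (x : Fin n → ℝ) : ℕ :=
  Finset.univ.sup fun p : (Fin n → Bool) × Fin n =>
    signChanges (rotList (replZeros x p.1) p.2)

/-- `A` is strictly sign-regular of order `k` (`SSR_k`): all `k×k` minors are
nonzero and have the same sign. -/
def SSRof {n m : ℕ} (A : Matrix (Fin n) (Fin m) ℝ) (k : ℕ) : Prop :=
  (∀ (α : Fin k → Fin n) (β : Fin k → Fin m), StrictMono α → StrictMono β →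
      0 < (A.submatrix α β).det) ∨
  (∀ (α : Fin k → Fin n) (β : Fin k → Fin m), StrictMono α → StrictMono β →
      (A.submatrix α β).det < 0)

/-- `A` is sign-regular of order `k` (`SR_k`): all `k×k` minors have the same
non-strict sign. -/
def SRof {n m : ℕ} (A : Matrix (Fin n) (Fin m) ℝ) (k : ℕ) : Prop :=
  (∀ (α : Fin k → Fin n) (β : Fin k → Fin m), StrictMono α → StrictMono β →
      0 ≤ (A.submatrix α β).det) ∨
  (∀ (α : Fin k → Fin n) (β : Fin k → Fin m), StrictMono α → StrictMono β →
      (A.submatrix α β).det ≤ 0)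

/-- A square matrix is Metzler if all its off-diagonal entries are nonnegative. -/
def IsMetzler {n : ℕ} (A : Matrix (Fin n) (Fin n) ℝ) : Prop :=
  ∀ i j : Fin n, i ≠ j → 0 ≤ A i j

/-- A square matrix is irreducible if the directed graph with an edge from `i`
to `j` whenever `i ≠ j` and `A i j ≠ 0` is strongly connected. -/
def IsIrreducibleMatrix {n : ℕ} (A : Matrix (Fin n) (Fin n) ℝ) : Prop :=
  ∀ i j : Fin n, i ≠ j → Relation.TransGen (fun p q : Fin n => p ≠ q ∧ A p q ≠ 0) i j

/-- Membership in `Q`: Metzler, and the nonzero entries lie only on the main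
diagonal, the super- and sub-diagonals, and the corner positions `(1,n)`, `(n,1)`
(in 0-indexed form: `(0, n-1)` and `(n-1, 0)`). -/
def memQ {n : ℕ} (A : Matrix (Fin n) (Fin n) ℝ) : Prop :=
  IsMetzler A ∧ ∀ i j : Fin n, A i j ≠ 0 →
    ((i : ℕ) = (j : ℕ) ∨ (j : ℕ) = (i : ℕ) + 1 ∨ (i : ℕ) = (j : ℕ) + 1 ∨
      ((i : ℕ) = 0 ∧ (j : ℕ) = n - 1) ∨ ((i : ℕ) = n - 1 ∧ (j : ℕ) = 0))

/-- Membership in `Q⁺`: in `Q` and irreducible. -/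
def memQplus {n : ℕ} (A : Matrix (Fin n) (Fin n) ℝ) : Prop :=
  memQ A ∧ IsIrreducibleMatrix A

/-- `P` is the permutation matrix of a cyclic shift `j ↦ j + k (mod n)`. -/
def IsCyclicPermMatrix {n : ℕ} (P : Matrix (Fin n) (Fin n) ℝ) : Prop :=
  ∃ k : ℕ, ∀ i j : Fin n, P i j = if (j : ℕ) % n = ((i : ℕ) + k) % n then 1 else 0

/-!
Once the zeros of `x` are filled in, every rotation `[y i, …, y i]` counts the sign changes
around the same closed loop, so the count does not depend on the rotation, and it is even
because the loop returns to its starting sign. It exceeds the linear count by at most the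
closing pair, hence it is the linear count rounded up to an even number; rounding up to even
is monotone, so it commutes with maximising over the fillings.
-/

open Finset

noncomputable def cyclicSignChanges (l : List ℝ) : ℕ :=
  signChanges (l ++ l.take 1)

lemma signChanges_cons_append_singleton (a : ℝ) (l : List ℝ) (c : ℝ) :
    signChanges (a :: l ++ [c]) =
      signChanges (a :: l) + if (a :: l).getLast (List.cons_ne_nil a l) * c < 0 then 1 else 0 := by
  induction l generalizing a with
  | nil => simp only [signChanges, List.getLast_singleton, zero_add]; rfl
  | cons b l ih =>
    rw [List.cons_append, List.cons_append, signChanges, ← List.cons_append, ih, signChanges,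
      List.getLast_cons_cons, Nat.add_assoc]

lemma cyclicSignChanges_cons (a : ℝ) (l : List ℝ) :
    cyclicSignChanges (a :: l) = signChanges (a :: l ++ [a]) := rfl

lemma cyclicSignChanges_rotate_one (l : List ℝ) :
    cyclicSignChanges (l.rotate 1) = cyclicSignChanges l := by
  match l with
  | [] => rfl
  | [a] => rw [List.rotate_singleton]
  | a :: b :: t =>
    rw [List.rotate_cons_succ, List.rotate_zero, List.cons_append, cyclicSignChanges_cons,
      cyclicSignChanges_cons, signChanges_cons_append_singleton, List.cons_append, List.cons_append,
      signChanges, List.getLast_cons, List.getLast_append_singleton, Nat.add_comm]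
    exact List.append_ne_nil_of_right_ne_nil t (List.cons_ne_nil a [])

lemma cyclicSignChanges_rotate (l : List ℝ) (k : ℕ) :
    cyclicSignChanges (l.rotate k) = cyclicSignChanges l := by
  induction k with
  | zero => rw [List.rotate_zero]
  | succ k ih => rw [← List.rotate_rotate, cyclicSignChanges_rotate_one, ih]

lemma signChanges_le_cyclicSignChanges (l : List ℝ) :
    signChanges l ≤ cyclicSignChanges l := by
  cases l with
  | nil => rfl
  | cons a t => rw [cyclicSignChanges_cons, signChanges_cons_append_singleton]; omega

lemma cyclicSignChanges_le_signChanges_add_one (l : List ℝ) :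
    cyclicSignChanges l ≤ signChanges l + 1 := by
  cases l with
  | nil => exact Nat.zero_le _
  | cons a t => rw [cyclicSignChanges_cons, signChanges_cons_append_singleton]; split <;> omega

lemma mul_neg_iff_of_ne_zero {R : Type*} [Ring R] [LinearOrder R] [IsStrictOrderedRing R]
    {a b : R} (ha : a ≠ 0) (hb : b ≠ 0) : a * b < 0 ↔ ¬(0 < a ↔ 0 < b) := by
  rcases ha.lt_or_gt with ha | ha <;> rcases hb.lt_or_gt with hb | hb <;>
    simp [mul_neg_iff, ha, hb, ha.not_gt, hb.not_gt]

lemma even_signChanges_cons_iff {a : ℝ} {l : List ℝ} (h : (0 : ℝ) ∉ a :: l) :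
    Even (signChanges (a :: l)) ↔ (0 < a ↔ 0 < (a :: l).getLast (List.cons_ne_nil a l)) := by
  induction l generalizing a with
  | nil => simp [signChanges]
  | cons b l ih =>
    have ha : a ≠ 0 := fun ha => h (ha ▸ List.mem_cons_self ..)
    have hb : b ≠ 0 := fun hb => h (hb ▸ List.mem_cons_of_mem _ (List.mem_cons_self ..))
    rw [signChanges, List.getLast_cons_cons, add_comm]
    simp only [mul_neg_iff_of_ne_zero ha hb]
    have ih := ih (List.not_mem_of_not_mem_cons h)
    split_ifs <;> simp only [add_zero, Nat.even_add_one, ih] <;> tauto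

lemma even_cyclicSignChanges {l : List ℝ} (h : (0 : ℝ) ∉ l) : Even (cyclicSignChanges l) := by
  cases l with
  | nil => exact ⟨0, rfl⟩
  | cons a t =>
    rw [cyclicSignChanges_cons, List.cons_append, even_signChanges_cons_iff ?_]
    · simp
    · simp only [List.mem_cons, List.mem_append] at h ⊢; tauto

def evenCeil (k : ℕ) : ℕ := if Even k then k else k + 1

lemma evenCeil_mono : Monotone evenCeil := by
  intro a b hab
  simp only [evenCeil, Nat.even_iff]
  split_ifs <;> omega

lemma eq_evenCeil_of_even {a c : ℕ} (hc : Even c) (h₁ : a ≤ c) (h₂ : c ≤ a + 1) :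
    c = evenCeil a := by
  rw [Nat.even_iff] at hc
  simp only [evenCeil, Nat.even_iff]
  split_ifs <;> omega

lemma cyclicSignChanges_eq_evenCeil {l : List ℝ} (h : (0 : ℝ) ∉ l) :
    cyclicSignChanges l = evenCeil (signChanges l) :=
  eq_evenCeil_of_even (even_cyclicSignChanges h) (signChanges_le_cyclicSignChanges l)
    (cyclicSignChanges_le_signChanges_add_one l)

lemma signChanges_rotList {n : ℕ} (y : Fin n → ℝ) (i : Fin n) :
    signChanges (rotList y i) = cyclicSignChanges (List.ofFn y) := by
  rw [← cyclicSignChanges_rotate _ i, cyclicSignChanges, rotList, List.take_one,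
    List.head?_rotate (by simp)]
  simp

lemma zero_notMem_ofFn_replZeros {n : ℕ} (x : Fin n → ℝ) (ε : Fin n → Bool) :
    (0 : ℝ) ∉ List.ofFn (replZeros x ε) := by
  simp only [List.mem_ofFn, replZeros, not_exists]
  intro i
  split_ifs <;> norm_num [*]

lemma sPlusC_eq_sup_cyclicSignChanges {n : ℕ} (x : Fin n → ℝ) :
    sPlusC x = univ.sup fun ε => cyclicSignChanges (List.ofFn (replZeros x ε)) := by
  refine le_antisymm (Finset.sup_le fun p _ => ?_) (Finset.sup_le fun ε _ => ?_)
  · rw [signChanges_rotList]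
    exact le_sup (f := fun ε => cyclicSignChanges (List.ofFn (replZeros x ε))) (mem_univ p.1)
  · cases n with
    | zero => exact Nat.zero_le _
    | succ m =>
      rw [← signChanges_rotList _ 0]
      exact le_sup (f := fun p : (Fin (m + 1) → Bool) × Fin (m + 1) =>
        signChanges (rotList (replZeros x p.1) p.2)) (mem_univ (ε, 0))

/-- For any `x ∈ ℝⁿ`, `s_c⁺(x) = s⁺(x)` if `s⁺(x)` is even and
`s_c⁺(x) = s⁺(x) + 1` if `s⁺(x)` is odd. -/
theorem cyclic_sPlus_eq (n : ℕ) (x : Fin n → ℝ) :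
    sPlusC x = if Even (sPlus x) then sPlus x else sPlus x + 1 := by
  calc sPlusC x = univ.sup fun ε => cyclicSignChanges (List.ofFn (replZeros x ε)) :=
        sPlusC_eq_sup_cyclicSignChanges x
    _ = univ.sup fun ε => evenCeil (signChanges (List.ofFn (replZeros x ε))) :=
        sup_congr rfl fun ε _ => cyclicSignChanges_eq_evenCeil (zero_notMem_ofFn_replZeros x ε)
    _ = evenCeil (sPlus x) :=
        (apply_sup_eq_sup_comp_of_linearOrder evenCeil evenCeil_mono rfl).symm
end

section
/- Let u¹, …, u^m ∈ ℝ^n with m < n, and let U ∈ ℝ^{n×m} be the matrix whose columns are u¹, …, u^m. The following two conditions are equivalent: (1) for any real numbers c₁, …, c_m that are not all zero, s^+(Σ_{i=1}^m c_i u^i) ≤ m − 1; (2) all m×m minors of U are nonzero and have the same sign (U is strictly sign-regular of order m, SSR_m). -/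
/-!
Write `x = U c`. For rows `τ₀ < ⋯ < τₘ`, Laplace expansion of the singular matrix `[x_τ | U_τ]`
along its first column gives `∑ⱼ (-1)ʲ x(τⱼ) Δⱼ = 0`, where `Δⱼ` is the maximal minor of `U` on
the rows `τ` without `τⱼ`. Now `s⁺(x) ≥ m` means exactly that `(-1)ʲ x(τⱼ)` has a constant weak
sign along some such `τ`. If `U` is `SSR_m`, all terms of the identity then have one weak sign, so
they vanish, and `c = 0` because the minor on `τ₀, …, τₘ₋₁` is nonzero. Conversely, a vanishing
minor gives `c ≠ 0` with `m` zeros of `U c`, so `s⁺(U c) ≥ m`. For two row sets differing in one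
row, pick `c ≠ 0` with `U c` vanishing on their `m - 1` common rows: the identity has two terms,
whose signs `(-1)ʲ x(τⱼ)` must differ, so the two minors have the same sign. Finally, any two
`m`-sets of rows are connected by such exchanges.
-/

open Matrix

lemma signChanges_cons_cons (a b : ℝ) (l : List ℝ) :
    signChanges (a :: b :: l) = (if a * b < 0 then 1 else 0) + signChanges (b :: l) := rfl

lemma signChanges_zero_cons (l : List ℝ) : signChanges (0 :: l) = signChanges l := by
  cases l <;> simp [signChanges]

lemma signChanges_cons_le_cons_cons (a : ℝ) {b : ℝ} (hb : b ≠ 0) (l : List ℝ) :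
    signChanges (a :: l) ≤ signChanges (a :: b :: l) := by
  cases l with
  | nil => simp [signChanges]
  | cons c l =>
    have hsplit : a * c < 0 → a * b < 0 ∨ b * c < 0 := fun h => by
      by_contra! h'
      nlinarith [mul_nonneg h'.1 h'.2, mul_neg_of_pos_of_neg (mul_self_pos.2 hb) h]
    simp only [signChanges_cons_cons]
    split_ifs <;> grind

lemma List.Sublist.signChanges_le {l₁ l₂ : List ℝ} (h : l₁.Sublist l₂)
    (hl₂ : ∀ b ∈ l₂, b ≠ 0) : signChanges l₁ ≤ signChanges l₂ := by
  suffices ∀ a, signChanges (a :: l₁) ≤ signChanges (a :: l₂) by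
    simpa only [signChanges_zero_cons] using this 0
  induction h with
  | slnil => exact fun _ => le_rfl
  | cons b _ ih =>
    exact fun a => (ih (fun c hc => hl₂ c (.tail _ hc)) a).trans
      (signChanges_cons_le_cons_cons a (hl₂ b (.head _)) _)
  | cons_cons b _ ih =>
    intro a
    simp only [signChanges_cons_cons]
    have := ih (fun c hc => hl₂ c (.tail _ hc)) b
    omega

lemma signChanges_eq_of_isChain {l : List ℝ} (h : l.IsChain (· * · < 0)) :
    signChanges l = l.length - 1 := by
  induction l with
  | nil => rfl
  | cons a l ih =>
    cases l with
    | nil => rfl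
    | cons b l =>
      rw [List.isChain_cons_cons] at h
      rw [signChanges_cons_cons, if_pos h.1, ih h.2]
      simp [add_comm]

lemma exists_cons_sublist_isChain (a : ℝ) (l : List ℝ) (hl : ∀ b ∈ a :: l, b ≠ 0) :
    ∃ l', (a :: l').Sublist (a :: l) ∧ (a :: l').IsChain (· * · < 0) ∧
      l'.length = signChanges (a :: l) := by
  induction l generalizing a with
  | nil => exact ⟨[], .refl _, .singleton a, rfl⟩
  | cons b l ih =>
    obtain ⟨l', hsub, hchain, hlen⟩ := ih b fun c hc => hl c (.tail _ hc)
    rw [signChanges_cons_cons]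
    by_cases hab : a * b < 0
    · exact ⟨b :: l', hsub.cons_cons a, hchain.cons_cons hab, by simp [hab, hlen, add_comm]⟩
    · refine ⟨l', ((List.sublist_cons_self b l').trans hsub).cons_cons a, ?_,
        by simp [hab, hlen]⟩
      have hab' : 0 < a * b := (not_lt.mp hab).lt_of_ne
        (mul_ne_zero (hl a (.head _)) (hl b (.tail _ (.head _)))).symm
      cases l' with
      | nil => exact .singleton a
      | cons c l' =>
        rw [List.isChain_cons_cons] at hchain ⊢
        refine ⟨?_, hchain.2⟩
        by_contra! hac
        nlinarith [mul_neg_of_pos_of_neg hab' hchain.1, mul_nonneg (mul_self_nonneg b) hac]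

theorem List.ofFn_comp_sublist {α : Type*} {n k : ℕ} (y : Fin n → α) {t : Fin k → Fin n}
    (ht : StrictMono t) : (ofFn (y ∘ t)).Sublist (ofFn y) := by
  refine sublist_iff_exists_fin_orderEmbedding_get_eq.mpr
    ⟨OrderEmbedding.ofStrictMono (Fin.cast length_ofFn.symm ∘ t ∘ Fin.cast length_ofFn)
      ((Fin.cast_strictMono _).comp (ht.comp (Fin.cast_strictMono _))), fun i => ?_⟩
  simp only [List.get_ofFn, OrderEmbedding.coe_ofStrictMono]
  rfl

theorem List.sublist_ofFn_iff {α : Type*} {n : ℕ} {l : List α} {y : Fin n → α} :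
    l.Sublist (ofFn y) ↔ ∃ t : Fin l.length → Fin n, StrictMono t ∧ ofFn (y ∘ t) = l := by
  refine ⟨fun h => ?_, fun ⟨t, ht, hl⟩ => hl ▸ ofFn_comp_sublist y ht⟩
  obtain ⟨f, hf⟩ := sublist_iff_exists_fin_orderEmbedding_get_eq.mp h
  refine ⟨Fin.cast length_ofFn ∘ f, (Fin.cast_strictMono _).comp f.strictMono,
    ext_get (by simp) fun i _ h => ?_⟩
  rw [List.get_ofFn, hf, List.get_ofFn]
  rfl

theorem isChain_ofFn_iff_exists_alternating {k : ℕ} {z : Fin (k + 1) → ℝ} (hz : z 0 ≠ 0) :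
    (List.ofFn z).IsChain (· * · < 0) ↔
      ∃ σ : ℝ, ∀ j : Fin (k + 1), 0 < σ * (-1) ^ (j : ℕ) * z j := by
  rw [List.isChain_ofFn]
  constructor
  · refine fun h => ⟨z 0, fun j => ?_⟩
    induction j using Fin.induction with
    | zero => simpa using mul_self_pos.2 hz
    | succ j ih =>
      have hj : z j.castSucc * z j.succ < 0 := h j (by omega)
      rw [Fin.val_castSucc] at ih
      rw [Fin.val_succ, pow_succ]
      nlinarith [mul_neg_of_pos_of_neg ih hj, sq_nonneg (z j.castSucc)]
  · rintro ⟨σ, h⟩ i hi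
    have hpos := mul_pos (h ⟨i, by omega⟩) (h ⟨i + 1, hi⟩)
    have hsq : (-1 : ℝ) ^ i * (-1) ^ i = 1 := by rw [← mul_pow]; simp
    have : σ * (-1) ^ i * z ⟨i, by omega⟩ * (σ * (-1) ^ (i + 1) * z ⟨i + 1, hi⟩) =
        -(σ * σ) * ((-1) ^ i * (-1) ^ i) * (z ⟨i, by omega⟩ * z ⟨i + 1, hi⟩) := by ring
    rw [this, hsq] at hpos
    nlinarith [mul_self_nonneg σ]

theorem le_signChanges_ofFn_iff {n k : ℕ} (hn : 0 < n) {y : Fin n → ℝ} (hy : ∀ i, y i ≠ 0) :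
    k ≤ signChanges (List.ofFn y) ↔
      ∃ t : Fin (k + 1) → Fin n, StrictMono t ∧
        ∃ σ : ℝ, ∀ j : Fin (k + 1), 0 < σ * (-1) ^ (j : ℕ) * y (t j) := by
  have hy' : ∀ b ∈ List.ofFn y, b ≠ 0 := by
    simpa only [List.mem_ofFn, forall_exists_index, forall_apply_eq_imp_iff] using hy
  constructor
  · intro hk
    obtain ⟨n, rfl⟩ : ∃ n', n = n' + 1 := ⟨n - 1, by omega⟩
    rw [List.ofFn_succ] at hk hy'
    obtain ⟨l, hsub, hchain, hlen⟩ := exists_cons_sublist_isChain _ _ hy'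
    set L := (y 0 :: l).take (k + 1)
    have hL : L.length = k + 1 := by simp [L]; omega
    have hLsub : L.Sublist (List.ofFn y) := by
      rw [List.ofFn_succ]; exact (List.take_sublist _ _).trans hsub
    obtain ⟨t, ht, hLt⟩ := List.sublist_ofFn_iff.mp hLsub
    refine ⟨t ∘ Fin.cast hL.symm, ht.comp (Fin.cast_strictMono _),
      (isChain_ofFn_iff_exists_alternating (z := y ∘ t ∘ Fin.cast hL.symm) (hy _)).mp ?_⟩
    rw [show List.ofFn (y ∘ t ∘ Fin.cast hL.symm) = L from (List.ofFn_congr hL _).symm.trans hLt]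
    exact hchain.take _
  · rintro ⟨t, ht, σ, hσ⟩
    have hchain :=
      (isChain_ofFn_iff_exists_alternating (z := y ∘ t) (hy _)).mpr ⟨σ, hσ⟩
    calc k = signChanges (List.ofFn (y ∘ t)) := by
          rw [signChanges_eq_of_isChain hchain]; simp
      _ ≤ signChanges (List.ofFn y) := (List.ofFn_comp_sublist y ht).signChanges_le hy'

lemma replZeros_ne_zero {n : ℕ} (x : Fin n → ℝ) (ε : Fin n → Bool) (i : Fin n) :
    replZeros x ε i ≠ 0 := by
  unfold replZeros
  split_ifs <;> norm_num [*]

lemma replZeros_of_ne_zero {n : ℕ} {x : Fin n → ℝ} (ε : Fin n → Bool) {i : Fin n}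
    (hi : x i ≠ 0) : replZeros x ε i = x i :=
  if_neg hi

theorem le_sPlus_iff {n k : ℕ} (hn : 0 < n) (x : Fin n → ℝ) :
    k ≤ sPlus x ↔ ∃ t : Fin (k + 1) → Fin n, StrictMono t ∧
      ∃ σ : ℝ, σ ≠ 0 ∧ ∀ j : Fin (k + 1), 0 ≤ σ * (-1) ^ (j : ℕ) * x (t j) := by
  constructor
  · intro hk
    obtain ⟨ε, -, hε⟩ := Finset.exists_mem_eq_sup Finset.univ Finset.univ_nonempty
      fun ε => signChanges (List.ofFn (replZeros x ε))
    rw [sPlus, hε, le_signChanges_ofFn_iff hn (replZeros_ne_zero x ε)] at hk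
    obtain ⟨t, ht, σ, hσ⟩ := hk
    refine ⟨t, ht, σ, fun h => by simpa [h] using hσ 0, fun j => ?_⟩
    by_cases hx : x (t j) = 0
    · simp [hx]
    · simpa only [replZeros_of_ne_zero ε hx] using (hσ j).le
  · rintro ⟨t, ht, σ, hσ, hx⟩
    -- a zero at `t j` is replaced by the sign of `σ (-1)ʲ`
    let ε i := decide (0 < σ * (-1) ^ (Function.invFun t i).val)
    have hy : ∀ j : Fin (k + 1), 0 < σ * (-1) ^ (j : ℕ) * replZeros x ε (t j) := fun j => by
      have hs : σ * (-1) ^ (j : ℕ) ≠ 0 := mul_ne_zero hσ (by simp)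
      by_cases hxj : x (t j) = 0
      · simp only [replZeros, hxj, if_true, ε, Function.leftInverse_invFun ht.injective j]
        rcases hs.lt_or_gt with hneg | hpos
        · simp [not_lt.mpr hneg.le, hneg]
        · simp [hpos]
      · rw [replZeros_of_ne_zero ε hxj]
        exact (hx j).lt_of_ne (mul_ne_zero hs hxj).symm
    calc k ≤ signChanges (List.ofFn (replZeros x ε)) :=
          (le_signChanges_ofFn_iff hn (replZeros_ne_zero x ε)).mpr ⟨t, ht, σ, hy⟩
      _ ≤ sPlus x := Finset.le_sup (f := fun ε => signChanges (List.ofFn (replZeros x ε)))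
          (Finset.mem_univ ε)

theorem le_sPlus_of_eq_zero_off_pair {n k : ℕ} (x : Fin n → ℝ) {t : Fin (k + 1) → Fin n}
    (ht : StrictMono t) (i j : Fin (k + 1)) (hzero : ∀ l, l ≠ i → l ≠ j → x (t l) = 0)
    (hij : 0 ≤ (-1) ^ (i : ℕ) * x (t i) * ((-1) ^ (j : ℕ) * x (t j))) : k ≤ sPlus x := by
  refine (le_sPlus_iff (t 0).pos x).mpr ⟨t, ht, ?_⟩
  set a := (-1) ^ (i : ℕ) * x (t i)
  set b := (-1) ^ (j : ℕ) * x (t j)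
  have key (σ : ℝ) (hi : 0 ≤ σ * a) (hj : 0 ≤ σ * b) (l : Fin (k + 1)) :
      0 ≤ σ * (-1) ^ (l : ℕ) * x (t l) := by
    rw [mul_assoc]
    by_cases hli : l = i
    · subst hli; exact hi
    by_cases hlj : l = j
    · subst hlj; exact hj
    simp [hzero l hli hlj]
  -- `σ = a + b` has the sign of both `a` and `b`, unless both vanish
  by_cases hab : a + b = 0
  · have ha : a = 0 := by nlinarith
    exact ⟨1, one_ne_zero, key 1 (by simp [ha]) (by simp [show b = 0 by linarith])⟩
  · exact ⟨a + b, hab, key _ (by nlinarith [mul_self_nonneg a])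
      (by nlinarith [mul_self_nonneg b])⟩

theorem Matrix.sum_neg_one_pow_mul_mulVec_mul_det_succAbove {R : Type*} [CommRing R]
    [IsDomain R] {m : ℕ} (A : Matrix (Fin (m + 1)) (Fin m) R) (c : Fin m → R) :
    ∑ j : Fin (m + 1), (-1) ^ (j : ℕ) * (A *ᵥ c) j * (A.submatrix j.succAbove id).det = 0 := by
  let W : Matrix (Fin (m + 1)) (Fin (m + 1)) R := of fun i => Fin.cons ((A *ᵥ c) i) (A i)
  have hW : W *ᵥ Fin.cons (-1) c = 0 := by
    ext i
    simp [W, mulVec, dotProduct, Fin.sum_univ_succ]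
  calc _ = W.det := by
        rw [det_succ_column_zero]
        rfl
    _ = 0 := exists_mulVec_eq_zero_iff.mp ⟨_, fun h => by simpa using congrFun h 0, hW⟩

theorem sPlus_mulVec_lt_of_ssrOf {n m : ℕ} (hn : 0 < n) {U : Matrix (Fin n) (Fin m) ℝ}
    (hU : SSRof U m) {c : Fin m → ℝ} (hc : c ≠ 0) : sPlus (U *ᵥ c) < m := by
  by_contra! h
  obtain ⟨t, ht, σ, hσ, hx⟩ := (le_sPlus_iff hn _).mp h
  obtain ⟨e, he⟩ : ∃ e : ℝ, ∀ α, StrictMono α → 0 < e * (U.submatrix α id).det := by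
    rcases hU with h | h
    · exact ⟨1, fun α hα => by simpa using h α id hα strictMono_id⟩
    · exact ⟨-1, fun α hα => by simpa using h α id hα strictMono_id⟩
  set A := U.submatrix t id
  set D := fun j : Fin (m + 1) => (A.submatrix j.succAbove id).det
  have hD (j : Fin (m + 1)) : 0 < e * D j := he _ (ht.comp (Fin.strictMono_succAbove j))
  have hterm (j : Fin (m + 1)) : 0 ≤ σ * (-1) ^ (j : ℕ) * (A *ᵥ c) j * (e * D j) :=
    mul_nonneg (hx j) (hD j).le
  have hsum : ∑ j : Fin (m + 1), σ * (-1) ^ (j : ℕ) * (A *ᵥ c) j * (e * D j) = 0 := by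
    rw [← mul_zero (σ * e), ← A.sum_neg_one_pow_mul_mulVec_mul_det_succAbove c, Finset.mul_sum]
    exact Finset.sum_congr rfl fun j _ => by ring
  have hzero (j : Fin (m + 1)) : (A *ᵥ c) j = 0 := by
    have := (Finset.sum_eq_zero_iff_of_nonneg fun j _ => hterm j).mp hsum j (Finset.mem_univ _)
    simpa [hσ, (hD j).ne'] using this
  refine hc (eq_zero_of_mulVec_eq_zero (M := A.submatrix Fin.castSucc id)
    (right_ne_zero_of_mul (he _ (ht.comp Fin.strictMono_castSucc)).ne') (funext fun i => ?_))
  exact hzero i.castSucc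

theorem det_submatrix_ne_zero_of_sPlus_lt {n m : ℕ} (hmn : m < n)
    {U : Matrix (Fin n) (Fin m) ℝ} (hU : ∀ c, c ≠ 0 → sPlus (U *ᵥ c) < m)
    {α : Fin m → Fin n} (hα : StrictMono α) : (U.submatrix α id).det ≠ 0 := by
  intro hdet
  obtain ⟨c, hc, hαc⟩ := exists_mulVec_eq_zero_iff.mpr hdet
  have hcard : (Finset.univ.image α).card = m := by
    rw [Finset.card_image_of_injective _ hα.injective, Finset.card_univ, Fintype.card_fin]
  obtain ⟨p, -, hp⟩ := Finset.exists_mem_notMem_of_card_lt_card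
    (s := Finset.univ.image α) (t := Finset.univ) (by simpa [hcard] using hmn)
  -- on the rows `α ∪ {p}`, `U c` can be nonzero only at `p`
  set T := insert p (Finset.univ.image α)
  have hT : T.card = m + 1 := by rw [Finset.card_insert_of_notMem hp, hcard]
  set t := T.orderEmbOfFin hT
  obtain ⟨j, hj⟩ : p ∈ Set.range t := by
    rw [Finset.range_orderEmbOfFin]; exact Finset.mem_insert_self _ _
  refine (hU c hc).not_ge (le_sPlus_of_eq_zero_off_pair _ t.strictMono j j
    (fun l hl _ => ?_) (mul_self_nonneg _))
  obtain ⟨r, -, hr⟩ := Finset.mem_image.mp <|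
    (Finset.mem_insert.mp (T.orderEmbOfFin_mem hT l)).resolve_left
      fun h => hl (t.injective (h.trans hj.symm))
  rw [← hr]
  exact congrFun hαc r

theorem det_mul_det_pos_of_sPlus_lt {n m : ℕ} (hmn : m < n)
    {U : Matrix (Fin n) (Fin m) ℝ} (hU : ∀ c, c ≠ 0 → sPlus (U *ᵥ c) < m)
    {τ : Fin (m + 1) → Fin n} (hτ : StrictMono τ) {i j : Fin (m + 1)} (hij : i ≠ j) :
    0 < (U.submatrix (τ ∘ i.succAbove) id).det * (U.submatrix (τ ∘ j.succAbove) id).det := by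
  set A := U.submatrix τ id
  set D := fun l : Fin (m + 1) => (A.submatrix l.succAbove id).det
  obtain ⟨j', hj'⟩ := Fin.exists_succAbove_eq hij.symm
  -- choose `c ≠ 0` with `U c` vanishing on all rows `τ l` except `τ i` and `τ j`
  have hdet : ((A.submatrix i.succAbove id).updateRow j' 0).det = 0 :=
    det_eq_zero_of_row_eq_zero j' fun _ => by simp
  obtain ⟨c, hc, hvc⟩ := exists_mulVec_eq_zero_iff.mpr hdet
  have hzero l (hli : l ≠ i) (hlj : l ≠ j) : (A *ᵥ c) l = 0 := by
    obtain ⟨r, rfl⟩ := Fin.exists_succAbove_eq hli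
    have hr : r ≠ j' := by rintro rfl; exact hlj hj'
    simpa [updateRow_ne hr, mulVec, dotProduct] using congrFun hvc r
  set a := (-1) ^ (i : ℕ) * (A *ᵥ c) i
  set b := (-1) ^ (j : ℕ) * (A *ᵥ c) j
  have hab : a * b < 0 := lt_of_not_ge fun h =>
    (hU c hc).not_ge (le_sPlus_of_eq_zero_off_pair (U *ᵥ c) hτ i j hzero h)
  have hsum : a * D i + b * D j = 0 := by
    rw [← A.sum_neg_one_pow_mul_mulVec_mul_det_succAbove c,
      Fintype.sum_eq_add i j hij fun l hl => by simp [hzero l hl.1 hl.2]]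
  have hD : D j ≠ 0 :=
    det_submatrix_ne_zero_of_sPlus_lt hmn hU (hτ.comp (Fin.strictMono_succAbove j))
  have key : a * a * (D i * D j) = -(a * b) * (D j * D j) := by
    linear_combination (a * D j) * hsum
  exact pos_of_mul_pos_right (key ▸ mul_pos (neg_pos.mpr hab) (mul_self_pos.mpr hD))
    (mul_self_nonneg a)

theorem Finset.apply_eq_of_forall_erase_eq {α β : Type*} [DecidableEq α] {k : ℕ}
    {g : Finset α → β}
    (hg : ∀ T : Finset α, T.card = k + 1 → ∀ a ∈ T, ∀ b ∈ T, g (T.erase a) = g (T.erase b))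
    {S T : Finset α} (hS : S.card = k) (hT : T.card = k) : g S = g T := by
  obtain ⟨d, hd⟩ : ∃ d, (S \ T).card = d := ⟨_, rfl⟩
  induction d generalizing S with
  | zero =>
    rw [card_eq_zero, sdiff_eq_empty_iff_subset] at hd
    rw [eq_of_subset_of_card_le hd (by omega)]
  | succ d ih =>
    obtain ⟨a, ha⟩ := card_pos.mp (show 0 < (S \ T).card by omega)
    obtain ⟨b, hb⟩ := card_pos.mp (show 0 < (T \ S).card by
      rw [← card_sdiff_comm (hS.trans hT.symm)]; omega)
    rw [mem_sdiff] at ha hb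
    have hbS : (insert b S).card = k + 1 := by rw [card_insert_of_notMem hb.2, hS]
    calc g S = g ((insert b S).erase b) := by rw [erase_insert hb.2]
      _ = g ((insert b S).erase a) := hg _ hbS _ (mem_insert_self _ _) _ (mem_insert_of_mem ha.1)
      _ = g T := by
        refine ih (by rw [card_erase_of_mem (mem_insert_of_mem ha.1), hbS]; rfl) ?_
        rw [erase_sdiff_comm, insert_sdiff_of_mem _ hb.1, card_erase_of_mem (mem_sdiff.mpr ha),
          hd]
        rfl

lemma Finset.image_comp_succAbove_univ {α : Type*} [DecidableEq α] {k : ℕ}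
    {τ : Fin (k + 1) → α} (hτ : Function.Injective τ) (i : Fin (k + 1)) :
    univ.image (τ ∘ i.succAbove) = (univ.image τ).erase (τ i) := by
  rw [image_comp, Fin.image_succAbove_univ, ← image_erase hτ, erase_eq, sdiff_singleton_eq_erase,
    compl_eq_univ_sdiff, sdiff_singleton_eq_erase]

lemma sign_eq_sign_of_mul_pos {a b : ℝ} (h : 0 < a * b) : SignType.sign a = SignType.sign b := by
  rcases mul_pos_iff.mp h with ⟨ha, hb⟩ | ⟨ha, hb⟩ <;> simp [sign_pos, sign_neg, *]

/-- The minor of `U` on the rows `S` (junk value `0` unless `#S = m`). -/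
noncomputable def maxMinor {n m : ℕ} (U : Matrix (Fin n) (Fin m) ℝ) (S : Finset (Fin n)) : ℝ :=
  if h : S.card = m then (U.submatrix (S.orderEmbOfFin h) id).det else 0

lemma card_image_univ_of_strictMono {n m : ℕ} {α : Fin m → Fin n} (hα : StrictMono α) :
    (Finset.univ.image α).card = m := by
  rw [Finset.card_image_of_injective _ hα.injective, Finset.card_univ, Fintype.card_fin]

lemma maxMinor_image_univ {n m : ℕ} (U : Matrix (Fin n) (Fin m) ℝ) {α : Fin m → Fin n}
    (hα : StrictMono α) : maxMinor U (Finset.univ.image α) = (U.submatrix α id).det := by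
  have h := card_image_univ_of_strictMono hα
  rw [maxMinor, dif_pos h,
    ← Finset.orderEmbOfFin_unique h (fun i => Finset.mem_image_of_mem α (Finset.mem_univ i)) hα]

theorem ssrOf_of_sPlus_lt {n m : ℕ} (hmn : m < n) {U : Matrix (Fin n) (Fin m) ℝ}
    (hU : ∀ c, c ≠ 0 → sPlus (U *ᵥ c) < m) : SSRof U m := by
  have hsign {S T : Finset (Fin n)} (hS : S.card = m) (hT : T.card = m) :
      SignType.sign (maxMinor U S) = SignType.sign (maxMinor U T) := by
    refine Finset.apply_eq_of_forall_erase_eq (g := fun S => SignType.sign (maxMinor U S))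
      (fun T hT a ha b hb => ?_) hS hT
    set τ := T.orderEmbOfFin hT
    obtain ⟨i, rfl⟩ : a ∈ Set.range τ := by rwa [Finset.range_orderEmbOfFin]
    obtain ⟨j, rfl⟩ : b ∈ Set.range τ := by rwa [Finset.range_orderEmbOfFin]
    have himg (l : Fin (m + 1)) : T.erase (τ l) = Finset.univ.image (τ ∘ l.succAbove) := by
      rw [Finset.image_comp_succAbove_univ τ.injective, T.image_orderEmbOfFin_univ hT]
    simp only [himg, maxMinor_image_univ U (τ.strictMono.comp (Fin.strictMono_succAbove _))]
    rcases eq_or_ne i j with rfl | hij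
    · rfl
    · exact sign_eq_sign_of_mul_pos (det_mul_det_pos_of_sPlus_lt hmn hU τ.strictMono hij)
  have hα₀ : StrictMono (Fin.castLE hmn.le) := Fin.strictMono_castLE _
  have hsign' {α : Fin m → Fin n} (hα : StrictMono α) : SignType.sign (U.submatrix α id).det =
      SignType.sign (U.submatrix (Fin.castLE hmn.le) id).det := by
    rw [← maxMinor_image_univ U hα, ← maxMinor_image_univ U hα₀]
    exact hsign (card_image_univ_of_strictMono hα) (card_image_univ_of_strictMono hα₀)
  rcases (det_submatrix_ne_zero_of_sPlus_lt hmn hU hα₀).lt_or_gt with hneg | hpos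
  · refine .inr fun α β hα hβ => ?_
    rw [hβ.eq_id, ← sign_eq_neg_one_iff, hsign' hα, sign_neg hneg]
  · refine .inl fun α β hα hβ => ?_
    rw [hβ.eq_id, ← sign_eq_one_iff, hsign' hα, sign_pos hpos]

/-- For `u¹,…,uᵐ ∈ ℝⁿ` with `m < n` and `U` the matrix with these
columns, the following are equivalent: (1) `s⁺(∑ cᵢ uⁱ) ≤ m - 1` whenever the
`cᵢ` are not all zero; (2) all `m×m` minors of `U` are nonzero and have the
same sign (`U` is `SSR_m`). -/
theorem sPlus_bound_iff_SSR (n m : ℕ) (hm : m < n) (u : Fin m → Fin n → ℝ) :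
    (∀ c : Fin m → ℝ, c ≠ 0 → sPlus (∑ i, c i • u i) ≤ m - 1) ↔
      SSRof (Matrix.of fun i j => u j i) m := by
  set U : Matrix (Fin n) (Fin m) ℝ := Matrix.of fun i j => u j i
  have hU (c : Fin m → ℝ) : ∑ i, c i • u i = U *ᵥ c := by
    ext p
    simp [U, mulVec, dotProduct, mul_comm]
  have hlt {c : Fin m → ℝ} (hc : c ≠ 0) : sPlus (U *ᵥ c) ≤ m - 1 ↔ sPlus (U *ᵥ c) < m := by
    have : m ≠ 0 := by rintro rfl; exact hc (Subsingleton.elim _ _)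
    omega
  simp only [hU]
  exact ⟨fun h => ssrOf_of_sPlus_lt hm fun c hc => (hlt hc).mp (h c hc),
    fun h c hc => (hlt hc).mpr (sPlus_mulVec_lt_of_ssrOf (by omega) h hc)⟩
end
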